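/- Assume α₁, α₂, α₃ > 0. Let x : [0,∞) → ℝ³ be differentiable with x'(t) = b(x(t)) for all t ≥ 0 and x(0) ≠ 0. Then there exists a constant c > 0 (depending on x(0)) such that ‖x(t)‖ ≥ c for all t ≥ 0; that is, the origin is a repeller and solutions starting away from the origin stay uniformly bounded away from it. -/

import Mathlib

open scoped RealInnerProductSpace

/-- The cubic Kolmogorov vector field on `ℝ³` (modelled as `EuclideanSpace ℝ (Fin 3)`):
`b(x)₁ = x₁(α₁ − α₁x₁² − (α₁+α₂+d₁)x₂² + d₂x₃²)`,
`b(x)₂ = x₂(α₂ + d₁x₁² − α₂x₂² − (α₂+α₃+d₃)x₃²)`,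
`b(x)₃ = x₃(α₃ − (α₃+α₁+d₂)x₁² + d₃x₂² − α₃x₃²)`. -/
noncomputable def bVF (α₁ α₂ α₃ d₁ d₂ d₃ : ℝ) (x : EuclideanSpace ℝ (Fin 3)) :
    EuclideanSpace ℝ (Fin 3) :=
  (WithLp.equiv 2 (Fin 3 → ℝ)).symm
    ![x 0 * (α₁ - α₁ * (x 0)^2 - (α₁ + α₂ + d₁) * (x 1)^2 + d₂ * (x 2)^2),
      x 1 * (α₂ + d₁ * (x 0)^2 - α₂ * (x 1)^2 - (α₂ + α₃ + d₃) * (x 2)^2),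
      x 2 * (α₃ - (α₃ + α₁ + d₂) * (x 0)^2 + d₃ * (x 1)^2 - α₃ * (x 2)^2)]

/-!
The interaction terms of `b` cancel in `⟪y, b y⟫ = (1 - ‖y‖²) (α₁y₁² + α₂y₂² + α₃y₃²)`, so
`‖x t‖²` is strictly increasing whenever `0 < ‖x t‖ < 1`. Hence `‖x t‖²` can never fall below
the level `min (‖x 0‖², 1/2)`, by the fencing theorem for differential inequalities.
-/

theorem le_of_hasDerivAt_pos_of_eq {V V' : ℝ → ℝ} {a m : ℝ}
    (hV : ∀ t, a ≤ t → HasDerivAt V (V' t) t) (ha : m ≤ V a)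
    (hpos : ∀ t, a ≤ t → V t = m → 0 < V' t) {t : ℝ} (ht : a ≤ t) : m ≤ V t := by
  have hneg : ∀ s ∈ Set.Ico a t, HasDerivWithinAt (-V) (-V' s) (Set.Ici s) s :=
    fun s hs => (hV s hs.1).neg.hasDerivWithinAt
  have hcont : ContinuousOn (-V) (Set.Icc a t) :=
    fun s hs => (hV s hs.1).continuousAt.neg.continuousWithinAt
  have := image_le_of_deriv_right_lt_deriv_boundary' hcont hneg (B := fun _ => -m) (B' := 0)
    (by simpa using ha) continuousOn_const (fun _ _ => hasDerivWithinAt_const _ _ _)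
    (fun s hs hVs => by simpa using hpos s hs.1 (neg_inj.mp hVs)) ⟨ht, le_rfl⟩
  simpa using this

theorem norm_sq_eq_sum_sq_fin_three (y : EuclideanSpace ℝ (Fin 3)) :
    ‖y‖ ^ 2 = y 0 ^ 2 + y 1 ^ 2 + y 2 ^ 2 := by
  rw [EuclideanSpace.norm_sq_eq, Fin.sum_univ_three]
  simp only [Real.norm_eq_abs, sq_abs]

theorem inner_bVF (α₁ α₂ α₃ d₁ d₂ d₃ : ℝ) (y : EuclideanSpace ℝ (Fin 3)) :
    ⟪y, bVF α₁ α₂ α₃ d₁ d₂ d₃ y⟫ =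
      (1 - ‖y‖ ^ 2) * (α₁ * y 0 ^ 2 + α₂ * y 1 ^ 2 + α₃ * y 2 ^ 2) := by
  simp only [bVF, PiLp.inner_apply, Fin.sum_univ_three, WithLp.equiv_symm_apply,
    Matrix.cons_val_zero, Matrix.cons_val_one, Matrix.cons_val_two, Matrix.head_cons,
    Matrix.tail_cons, RCLike.inner_apply, conj_trivial, norm_sq_eq_sum_sq_fin_three]
  ring

theorem inner_bVF_pos {α₁ α₂ α₃ : ℝ} (hα₁ : 0 < α₁) (hα₂ : 0 < α₂) (hα₃ : 0 < α₃)
    (d₁ d₂ d₃ : ℝ) {y : EuclideanSpace ℝ (Fin 3)} (hy₀ : 0 < ‖y‖ ^ 2) (hy₁ : ‖y‖ ^ 2 < 1) :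
    0 < ⟪y, bVF α₁ α₂ α₃ d₁ d₂ d₃ y⟫ := by
  rw [inner_bVF]
  refine mul_pos (by linarith) ?_
  set a := min α₁ (min α₂ α₃)
  have ha : 0 < a := lt_min hα₁ (lt_min hα₂ hα₃)
  have h₁ : a ≤ α₁ := min_le_left _ _
  have h₂ : a ≤ α₂ := (min_le_right _ _).trans (min_le_left _ _)
  have h₃ : a ≤ α₃ := (min_le_right _ _).trans (min_le_right _ _)
  rw [norm_sq_eq_sum_sq_fin_three] at hy₀
  nlinarith [mul_nonneg (sub_nonneg.mpr h₁) (sq_nonneg (y 0)),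
    mul_nonneg (sub_nonneg.mpr h₂) (sq_nonneg (y 1)),
    mul_nonneg (sub_nonneg.mpr h₃) (sq_nonneg (y 2)), mul_pos ha hy₀]

/-- If `αᵢ > 0`, the origin is a repeller: every solution with `x(0) ≠ 0` stays uniformly
bounded away from the origin. -/
theorem origin_repeller (α₁ α₂ α₃ d₁ d₂ d₃ : ℝ)
    (hα₁ : 0 < α₁) (hα₂ : 0 < α₂) (hα₃ : 0 < α₃)
    (x : ℝ → EuclideanSpace ℝ (Fin 3))
    (hx : ∀ t : ℝ, 0 ≤ t → HasDerivAt x (bVF α₁ α₂ α₃ d₁ d₂ d₃ (x t)) t)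
    (h0 : x 0 ≠ 0) :
    ∃ c : ℝ, 0 < c ∧ ∀ t : ℝ, 0 ≤ t → c ≤ ‖x t‖ := by
  set m := min (‖x 0‖ ^ 2) (1 / 2)
  have hm : 0 < m := lt_min (by positivity) one_half_pos
  have hbarrier : ∀ t, 0 ≤ t → m ≤ ‖x t‖ ^ 2 :=
    fun t => le_of_hasDerivAt_pos_of_eq (fun s hs => (hx s hs).norm_sq) (min_le_left _ _)
      fun s _ hs => mul_pos two_pos <| inner_bVF_pos hα₁ hα₂ hα₃ d₁ d₂ d₃ (hs ▸ hm)
        (hs ▸ (min_le_right _ _).trans_lt one_half_lt_one)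
  refine ⟨√m, Real.sqrt_pos.mpr hm, fun t ht => ?_⟩
  simpa using Real.sqrt_le_sqrt (hbarrier t ht)
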